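/- arXiv:1703.07269 — 3 statements merged into one kernel-verified Lean document; each statement's English description precedes it below -/
import Mathlib

section
/- Let c_1,...,c_n ≥ 0 and b_1,...,b_n ∈ {0,1} with ∑_{j=1}^n b_j = m < n, and let 0 < a < 1. Then ∑_{k=1}^n a^{∑_{j=k}^n b_j} c_k ≤ ∑_{k=1}^{m} a^{m-k+1} c_k + ∑_{k=m+1}^n c_k. -/
/-! Compare termwise. At most `k` of the `m` ones lie before index `k`, so the exponent of
`c k` is at least `m - k`, and `a ^ e ≤ a ^ (m - k)` since `a ≤ 1`; for `k ≥ m` use `a ^ e ≤ 1`. -/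

open Finset

theorem sub_le_sum_Ico_of_le_one {b : ℕ → ℕ} (hb : ∀ j, b j ≤ 1) {k n : ℕ} (hkn : k ≤ n) :
    ∑ j ∈ range n, b j - k ≤ ∑ j ∈ Ico k n, b j := by
  have hhead : ∑ j ∈ range k, b j ≤ k := by
    simpa using sum_le_card_nsmul (range k) b 1 fun j _ => hb j
  rw [← sum_range_add_sum_Ico b hkn]
  omega

theorem stmt_0 (n m : ℕ) (hmn : m < n) (a : ℝ) (ha : 0 < a) (ha1 : a < 1)
    (c : ℕ → ℝ) (hc : ∀ k, 0 ≤ c k)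
    (b : ℕ → ℕ) (hb : ∀ j, b j = 0 ∨ b j = 1)
    (hbm : ∑ j ∈ Finset.range n, b j = m) :
    ∑ k ∈ Finset.range n, a ^ (∑ j ∈ Finset.Ico k n, b j) * c k ≤
      ∑ k ∈ Finset.range m, a ^ (m - k) * c k + ∑ k ∈ Finset.Ico m n, c k := by
  have hb1 : ∀ j, b j ≤ 1 := fun j => by rcases hb j with h | h <;> simp [h]
  rw [← sum_range_add_sum_Ico _ hmn.le]
  refine add_le_add (sum_le_sum fun k hk => ?_) (sum_le_sum fun k _ => ?_)
  · have hexp := sub_le_sum_Ico_of_le_one hb1 ((mem_range.mp hk).trans hmn).le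
    rw [hbm] at hexp
    exact mul_le_mul_of_nonneg_right (pow_le_pow_of_le_one ha.le ha1.le hexp) (hc k)
  · exact mul_le_of_le_one_left (hc k) (pow_le_one₀ ha.le ha1.le)
end

section
/- Among all assignments b_1,...,b_n ∈ {0,1} with ∑ b_j = m, the assignment b_i = 1 for i ≤ m and b_i = 0 for i > m maximizes ∑_{k=1}^n a^{∑_{j=k}^n b_j} c_k, for any nonnegative c_k and 0 < a < 1. -/
/-! Compare the two sums term by term. Since every `b j ≤ 1`, at most `k` of the `m` ones sit
before position `k`, so at least `m - k` ones lie in `[k, n)`; the step assignment has exactly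
`min m n - k` there, the fewest possible. As `0 ≤ a ≤ 1`, a smaller exponent gives a larger power,
and `c k ≥ 0` preserves the inequality. -/

open Finset

theorem sum_Ico_ite_lt (k n m : ℕ) :
    ∑ j ∈ Ico k n, (if j < m then 1 else 0) = min m n - k := by
  have hfilter : (Ico k n).filter (· < m) = Ico k (min m n) := by
    ext j
    simp only [mem_filter, mem_Ico, lt_min_iff]
    omega
  rw [sum_boole, hfilter, Nat.card_Ico, Nat.cast_id]

theorem sum_range_sub_le_sum_Ico {b : ℕ → ℕ} (hb : ∀ j, b j ≤ 1) {k n : ℕ} (hkn : k ≤ n) :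
    (∑ j ∈ range n, b j) - k ≤ ∑ j ∈ Ico k n, b j := by
  have hhead : ∑ j ∈ range k, b j ≤ k := by
    simpa using sum_le_card_nsmul (range k) b 1 fun j _ => hb j
  rw [← sum_range_add_sum_Ico b hkn]
  omega

theorem stmt_1_general (n m : ℕ) (a : ℝ) (ha : 0 < a) (ha1 : a < 1)
    (c : ℕ → ℝ) (hc : ∀ k, 0 ≤ c k)
    (b : ℕ → ℕ) (hb : ∀ j, b j = 0 ∨ b j = 1)
    (hbm : ∑ j ∈ Finset.range n, b j = m) :
    ∑ k ∈ Finset.range n, a ^ (∑ j ∈ Finset.Ico k n, b j) * c k ≤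
      ∑ k ∈ Finset.range n,
        a ^ (∑ j ∈ Finset.Ico k n, (if j < m then 1 else 0)) * c k := by
  have hb1 : ∀ j, b j ≤ 1 := fun j => by rcases hb j with h | h <;> omega
  refine sum_le_sum fun k hk => ?_
  have hexp : ∑ j ∈ Ico k n, (if j < m then 1 else 0) ≤ ∑ j ∈ Ico k n, b j := by
    rw [sum_Ico_ite_lt]
    have := sum_range_sub_le_sum_Ico hb1 (mem_range.mp hk).le
    omega
  exact mul_le_mul_of_nonneg_right (pow_le_pow_of_le_one ha.le ha1.le hexp) (hc k)

theorem stmt_1 (n m : ℕ) (hmn : m ≤ n) (a : ℝ) (ha : 0 < a) (ha1 : a < 1)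
    (c : ℕ → ℝ) (hc : ∀ k, 0 ≤ c k)
    (b : ℕ → ℕ) (hb : ∀ j, b j = 0 ∨ b j = 1)
    (hbm : ∑ j ∈ Finset.range n, b j = m) :
    ∑ k ∈ Finset.range n, a ^ (∑ j ∈ Finset.Ico k n, b j) * c k ≤
      ∑ k ∈ Finset.range n,
        a ^ (∑ j ∈ Finset.Ico k n, (if j < m then 1 else 0)) * c k :=
  stmt_1_general n m a ha ha1 c hc b hb hbm
end

section
/- Under the setting where F^m is the empirical average of m i.i.d. samples of uniformly bounded L-Lipschitz functions on a compact set P (each bounded in [l,u]), with x*_m a minimizer of F^m over P and x* a minimizer of F = E F^m over P, one has P(|F^m(x*_m) − F(x*)| ≥ δ) ≤ 2 K (D/ε)^p exp(−2m(δ−2Lε)²/(u−l)²) for 0 < ε < min{D, δ/(2L)}, where K = (√p)^p. -/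
open MeasureTheory ProbabilityTheory Real Set
open scoped NNReal

/-!
If `|min F^m - min F| ≥ δ`, then `|F^m - F| ≥ δ` at some point of `P`, hence `≥ δ - 2Lε` at the
nearest point of an `ε`-net of `P`: the centres of a grid of cubes of side `2ε/√p`, at most
`(√p D/ε)^p` of them. At each net point, Hoeffding's inequality bounds the probability of such a
deviation by `2 exp(-2m(δ-2Lε)²/(u-l)²)`, and a union bound over the net concludes. Since net
points may lie outside `P`, the `f i` are first replaced by `L`-Lipschitz extensions with values
in `[l, u]`.
-/

lemma measureReal_sampleMean_sub_integral_ge_le {α ι : Type*} [MeasurableSpace α] [Fintype ι]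
    [Nonempty ι] {ν : Measure α} [IsProbabilityMeasure ν] {g : α → ℝ} (hg : Measurable g)
    {l u : ℝ} (hgb : ∀ᵐ x ∂ν, g x ∈ Icc l u) {a : ℝ} (ha : 0 ≤ a) :
    (Measure.pi fun _ : ι => ν).real
        {ξ | a ≤ (1 / Fintype.card ι : ℝ) * ∑ i, g (ξ i) - ν[g]} ≤
      exp (-(2 * Fintype.card ι * a ^ 2) / (u - l) ^ 2) := by
  have hm : (0 : ℝ) < Fintype.card ι := by positivity
  have hX : iIndepFun (fun i (ξ : ι → α) => g (ξ i) - ν[g]) (Measure.pi fun _ : ι => ν) :=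
    iIndepFun_pi (Ω := fun _ => α) (X := fun _ x => g x - ν[g])
      fun _ => (hg.sub_const _).aemeasurable
  have hsub : ∀ i : ι, HasSubgaussianMGF (fun ξ : ι → α => g (ξ i) - ν[g])
      ((‖u - l‖₊ / 2) ^ 2) (Measure.pi fun _ : ι => ν) := by
    intro i
    refine HasSubgaussianMGF.of_map (Y := fun ξ : ι → α => ξ i) (X := fun x => g x - ν[g])
      (measurable_pi_apply i).aemeasurable ?_
    rw [(measurePreserving_eval (fun _ : ι => ν) i).map_eq]
    exact hasSubgaussianMGF_of_mem_Icc hg.aemeasurable hgb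
  have hset : {ξ : ι → α | a ≤ (1 / Fintype.card ι : ℝ) * ∑ i, g (ξ i) - ν[g]} =
      {ξ | Fintype.card ι * a ≤ ∑ i, (g (ξ i) - ν[g])} := by
    ext ξ
    simp only [mem_ofPred_eq, Finset.sum_sub_distrib, Finset.sum_const, Finset.card_univ,
      nsmul_eq_mul]
    rw [← mul_le_mul_iff_of_pos_left hm]
    field_simp
  rw [hset]
  refine (HasSubgaussianMGF.measure_sum_ge_le_of_iIndepFun hX (fun i _ => hsub i)
    (by positivity)).trans_eq ?_
  simp only [Finset.sum_const, Finset.card_univ, nsmul_eq_mul]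
  push_cast
  rw [Real.norm_eq_abs, div_pow, sq_abs]
  field_simp

lemma measure_abs_sampleMean_sub_integral_ge_le {α ι : Type*} [MeasurableSpace α] [Fintype ι]
    [Nonempty ι] {ν : Measure α} [IsProbabilityMeasure ν] {g : α → ℝ} (hg : Measurable g)
    {l u : ℝ} (hgb : ∀ᵐ x ∂ν, g x ∈ Icc l u) {a : ℝ} (ha : 0 ≤ a) :
    (Measure.pi fun _ : ι => ν)
        {ξ | a ≤ |(1 / Fintype.card ι : ℝ) * ∑ i, g (ξ i) - ν[g]|} ≤
      ENNReal.ofReal (2 * exp (-(2 * Fintype.card ι * a ^ 2) / (u - l) ^ 2)) := by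
  have hupper := measureReal_sampleMean_sub_integral_ge_le (ι := ι) hg hgb ha
  have hlower := measureReal_sampleMean_sub_integral_ge_le (ι := ι) hg.neg
    (hgb.mono fun x hx => ⟨neg_le_neg hx.2, neg_le_neg hx.1⟩) ha
  rw [neg_sub_neg] at hlower
  have hsplit : {ξ : ι → α | a ≤ |(1 / Fintype.card ι : ℝ) * ∑ i, g (ξ i) - ν[g]|} ⊆
      {ξ | a ≤ (1 / Fintype.card ι : ℝ) * ∑ i, g (ξ i) - ν[g]} ∪
      {ξ | a ≤ (1 / Fintype.card ι : ℝ) * ∑ i, (-g) (ξ i) - ν[-g]} := by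
    intro ξ hξ
    simp only [mem_ofPred_eq, mem_union, Pi.neg_apply, Finset.sum_neg_distrib,
      integral_neg] at hξ ⊢
    rcases le_abs.mp hξ with h | h
    · exact Or.inl h
    · right; linarith
  calc _ ≤ _ := (measure_mono hsplit).trans (measure_union_le _ _)
    _ ≤ _ := by
        rw [two_mul, ENNReal.ofReal_add (by positivity) (by positivity), ← ofReal_measureReal,
          ← ofReal_measureReal]
        gcongr

lemma integral_uniformOfFintype {α : Type*} [Fintype α] [Nonempty α] [MeasurableSpace α]
    [MeasurableSingletonClass α] (g : α → ℝ) :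
    ∫ x, g x ∂(PMF.uniformOfFintype α).toMeasure = (1 / Fintype.card α : ℝ) * ∑ x, g x := by
  simp [PMF.integral_eq_sum, Finset.mul_sum]

lemma LipschitzOnWith.exists_lipschitzWith_mapsTo_Icc {α : Type*} [PseudoMetricSpace α]
    {f : α → ℝ} {s : Set α} {K : ℝ≥0} {l u : ℝ} (hf : LipschitzOnWith K f s)
    (hfs : MapsTo f s (Icc l u)) (hlu : l ≤ u) :
    ∃ g : α → ℝ, LipschitzWith K g ∧ EqOn f g s ∧ ∀ x, g x ∈ Icc l u := by
  obtain ⟨g, hg, hfg⟩ := hf.extend_real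
  refine ⟨fun x => max (min u (g x)) l, (hg.const_min u).max_const l, fun x hx => ?_,
    fun x => ⟨le_max_right _ _, max_le (min_le_left _ _) hlu⟩⟩
  show f x = max (min u (g x)) l
  rw [← hfg hx, min_eq_right (hfs hx).2, max_eq_left (hfs hx).1]

lemma LipschitzWith.mean {α ι : Type*} [PseudoMetricSpace α] [Fintype ι] {K : ℝ≥0}
    {h : ι → α → ℝ} (hh : ∀ i, LipschitzWith K (h i)) :
    LipschitzWith K fun x => (1 / Fintype.card ι : ℝ) * ∑ i, h i x := by
  refine LipschitzWith.of_dist_le_mul fun x y => ?_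
  rcases isEmpty_or_nonempty ι with hι | hι
  · simp only [Finset.univ_eq_empty, Finset.sum_empty, mul_zero, dist_self]
    positivity
  rw [Real.dist_eq, ← mul_sub, ← Finset.sum_sub_distrib, abs_mul,
    abs_of_pos (by positivity : (0 : ℝ) < 1 / Fintype.card ι)]
  calc 1 / (Fintype.card ι : ℝ) * |∑ i, (h i x - h i y)|
      ≤ 1 / (Fintype.card ι : ℝ) * ∑ _i : ι, K * dist x y := by
        gcongr
        refine (Finset.abs_sum_le_sum_abs _ _).trans (Finset.sum_le_sum fun i _ => ?_)
        simpa [Real.dist_eq] using (hh i).dist_le_mul x y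
    _ = K * dist x y := by simp

lemma abs_sub_le_abs_sub_add_of_lipschitzWith {α : Type*} [PseudoMetricSpace α] {K : ℝ≥0}
    {φ ψ : α → ℝ} (hφ : LipschitzWith K φ) (hψ : LipschitzWith K ψ) (x y : α) :
    |φ x - ψ x| ≤ |φ y - ψ y| + 2 * K * dist x y := by
  have h₁ := abs_le.mp (by simpa [Real.dist_eq] using hφ.dist_le_mul x y)
  have h₂ := abs_le.mp (by simpa [Real.dist_eq] using hψ.dist_le_mul x y)
  refine abs_le.mpr ⟨?_, ?_⟩ <;> linarith [neg_abs_le (φ y - ψ y), le_abs_self (φ y - ψ y)]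

lemma exists_le_abs_sub_of_isMinOn {α : Type*} {φ ψ : α → ℝ} {s : Set α} {x y : α} {δ : ℝ}
    (hx : x ∈ s) (hφ : IsMinOn φ s x) (hy : y ∈ s) (hψ : IsMinOn ψ s y)
    (h : δ ≤ |φ x - ψ y|) : ∃ z ∈ s, δ ≤ |φ z - ψ z| := by
  rcases le_abs.mp h with h | h
  · have : φ x ≤ φ y := hφ hy
    exact ⟨y, hy, by linarith [le_abs_self (φ y - ψ y)]⟩
  · have : ψ y ≤ ψ x := hψ hx
    exact ⟨x, hx, by linarith [neg_abs_le (φ x - ψ x)]⟩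

lemma exists_fin_abs_sub_add_half_mul_le {q s : ℝ} {k : ℕ} (hs : 0 < s) (hk : 0 < k)
    (hq : q ∈ Icc 0 (k * s)) : ∃ i : Fin k, |q - (i + 1 / 2) * s| ≤ s / 2 := by
  set i := min ⌊q / s⌋₊ (k - 1)
  have hcell : i * s ≤ q ∧ q ≤ (i + 1) * s := by
    rcases le_total ⌊q / s⌋₊ (k - 1) with h | h
    · have hi : i = ⌊q / s⌋₊ := min_eq_left h
      rw [hi, ← le_div_iff₀ hs, ← div_le_iff₀ hs]
      exact ⟨Nat.floor_le (div_nonneg hq.1 hs.le), (Nat.lt_floor_add_one _).le⟩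
    · have hi : (i : ℝ) + 1 = k := by
        rw [show i = k - 1 from min_eq_right h, Nat.cast_sub hk]; push_cast; ring
      have hki : (k : ℝ) - 1 ≤ q / s := by
        have := (Nat.floor_le (div_nonneg hq.1 hs.le)).trans' (Nat.cast_le.mpr h)
        push_cast [Nat.cast_sub hk] at this
        linarith
      rw [hi]
      refine ⟨?_, hq.2⟩
      rw [← le_div_iff₀ hs]
      linarith
  refine ⟨⟨i, by omega⟩, abs_le.mpr ⟨?_, ?_⟩⟩ <;> simp only <;> linarith [hcell.1, hcell.2]

lemma EuclideanSpace.dist_le_sqrt_card_mul {p : ℕ} {x y : EuclideanSpace ℝ (Fin p)} {r : ℝ}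
    (hr : 0 ≤ r) (h : ∀ j, |x j - y j| ≤ r) : dist x y ≤ √p * r := by
  rw [EuclideanSpace.dist_eq, ← Real.sqrt_sq hr, ← Real.sqrt_mul (Nat.cast_nonneg _)]
  refine Real.sqrt_le_sqrt ?_
  calc ∑ j, dist (x j) (y j) ^ 2 ≤ ∑ _j : Fin p, r ^ 2 := by
        gcongr with j
        rw [Real.dist_eq]
        exact h j
    _ = p * r ^ 2 := by simp

lemma exists_forall_apply_mem_Icc_add_diam {p : ℕ} {P : Set (EuclideanSpace ℝ (Fin p))}
    (hP : Bornology.IsBounded P) (j : Fin p) :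
    ∃ A : ℝ, ∀ x ∈ P, x j ∈ Icc A (A + Metric.diam P) := by
  set S := (fun y : EuclideanSpace ℝ (Fin p) => y j) '' P
  have hS : BddBelow S :=
    ((EuclideanSpace.proj (𝕜 := ℝ) (ι := Fin p) j).lipschitz.isBounded_image hP).bddBelow
  refine ⟨sInf S, fun x hx => ⟨csInf_le hS ⟨x, hx, rfl⟩, ?_⟩⟩
  rw [← sub_le_iff_le_add]
  refine le_csInf (show S.Nonempty from ⟨x j, x, hx, rfl⟩) ?_
  rintro _ ⟨y, hy, rfl⟩
  have := (le_abs_self _).trans ((PiLp.dist_apply_le x y j).trans_eq' (Real.dist_eq _ _).symm)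
  linarith [Metric.dist_le_diam_of_mem hP hx hy]

lemma exists_finset_card_le_forall_exists_dist_le {p : ℕ} {P : Set (EuclideanSpace ℝ (Fin p))}
    (hP : Bornology.IsBounded P) {ε : ℝ} (hε : 0 < ε) (hεD : ε ≤ Metric.diam P) :
    ∃ C : Finset (EuclideanSpace ℝ (Fin p)),
      (C.card : ℝ) ≤ √p ^ p * (Metric.diam P / ε) ^ p ∧ ∀ x ∈ P, ∃ c ∈ C, dist x c ≤ ε := by
  set D := Metric.diam P
  have hp : 0 < p := by
    rcases Nat.eq_zero_or_pos p with rfl | hp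
    · have : D = 0 := Metric.diam_subsingleton Set.subsingleton_of_subsingleton
      linarith
    · exact hp
  set s := 2 * ε / √p with hs_def
  set k := ⌈√p * D / ε / 2⌉₊
  have hs : 0 < s := by positivity
  have hsqrt : 1 ≤ √p := Real.one_le_sqrt.mpr (by exact_mod_cast hp)
  have ht : 1 ≤ √p * D / ε := by rw [le_div_iff₀ hε]; nlinarith
  have hk : 0 < k := Nat.ceil_pos.mpr (by positivity)
  have hkt : (k : ℝ) ≤ √p * D / ε := by
    have : (k : ℝ) < √p * D / ε / 2 + 1 := Nat.ceil_lt_add_one (by positivity)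
    rcases le_or_gt k 1 with hk1 | hk2
    · exact (Nat.cast_le_one.mpr hk1).trans ht
    · have : (2 : ℝ) ≤ k := by exact_mod_cast hk2
      linarith
  have hDks : D ≤ k * s := by
    calc D = √p * D / ε / 2 * s := by rw [hs_def]; field_simp
      _ ≤ k * s := by gcongr; exact Nat.le_ceil _
  choose A hA using exists_forall_apply_mem_Icc_add_diam hP
  set net : (Fin p → Fin k) → EuclideanSpace ℝ (Fin p) :=
    fun w => WithLp.toLp 2 fun j => A j + (w j + 1 / 2) * s
  refine ⟨Finset.univ.image net, ?_, ?_⟩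
  · calc ((Finset.univ.image net).card : ℝ) ≤ k ^ p := by
          exact_mod_cast Finset.card_image_le.trans (by simp)
      _ ≤ (√p * D / ε) ^ p := by gcongr
      _ = _ := by rw [mul_div_assoc, mul_pow]
  · intro x hx
    have hcell : ∀ j, ∃ i : Fin k, |(x j - A j) - (i + 1 / 2) * s| ≤ s / 2 := fun j =>
      exists_fin_abs_sub_add_half_mul_le hs hk
        ⟨by linarith [(hA j x hx).1], by linarith [(hA j x hx).2]⟩
    choose w hw using hcell
    refine ⟨net w, Finset.mem_image_of_mem _ (Finset.mem_univ _), ?_⟩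
    calc dist x (net w) ≤ √p * (s / 2) :=
          EuclideanSpace.dist_le_sqrt_card_mul (by positivity) fun j => by
            simpa [net, sub_sub] using hw j
      _ = ε := by rw [hs_def]; field_simp

theorem stmt_7_general (p n m : ℕ) [NeZero n] (hm : 0 < m)
    (P : Set (EuclideanSpace ℝ (Fin p))) (hP : IsCompact P)
    (f : Fin n → EuclideanSpace ℝ (Fin p) → ℝ)
    (L l u : ℝ) (hL : 0 < L) (hlu : l < u)
    (hLip : ∀ i, ∀ x ∈ P, ∀ y ∈ P, |f i x - f i y| ≤ L * dist x y)
    (hbdd : ∀ i, ∀ x ∈ P, l ≤ f i x ∧ f i x ≤ u)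
    (Fm : (Fin m → Fin n) → EuclideanSpace ℝ (Fin p) → ℝ)
    (hFm : ∀ ξ x, Fm ξ x = (1 / m : ℝ) * ∑ i, f (ξ i) x)
    (F : EuclideanSpace ℝ (Fin p) → ℝ) (hF : ∀ x, F x = (1 / n : ℝ) * ∑ i, f i x)
    (xm : (Fin m → Fin n) → EuclideanSpace ℝ (Fin p))
    (hxm : ∀ ξ, xm ξ ∈ P ∧ IsMinOn (Fm ξ) P (xm ξ))
    (xstar : EuclideanSpace ℝ (Fin p)) (hxstar : xstar ∈ P ∧ IsMinOn F P xstar)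
    (δ ε : ℝ) (hε : 0 < ε) (hεD : ε < Metric.diam P)
    (hεL : ε < δ / (2 * L)) :
    (Measure.pi fun _ : Fin m => (PMF.uniformOfFintype (Fin n)).toMeasure)
        {ξ | δ ≤ |Fm ξ (xm ξ) - F xstar|} ≤
      ENNReal.ofReal (2 * (Real.sqrt p) ^ p * (Metric.diam P / ε) ^ p *
        Real.exp (-(2 * m * (δ - 2 * L * ε) ^ 2) / (u - l) ^ 2)) := by
  have : NeZero m := ⟨hm.ne'⟩
  set ν := (PMF.uniformOfFintype (Fin n)).toMeasure
  set a := δ - 2 * L * ε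
  have ha : 0 ≤ a := by linarith [(lt_div_iff₀ (by positivity : 0 < 2 * L)).mp hεL]
  have hLipOn : ∀ i, LipschitzOnWith L.toNNReal (f i) P := fun i =>
    LipschitzOnWith.of_dist_le_mul fun x hx y hy => by
      simpa [Real.dist_eq, hL.le] using hLip i x hx y hy
  choose g hgLip hfg hgIcc using fun i =>
    (hLipOn i).exists_lipschitzWith_mapsTo_Icc (fun x hx => hbdd i x hx) hlu.le
  obtain ⟨C, hCcard, hC⟩ := exists_finset_card_le_forall_exists_dist_le hP.isBounded hε hεD.le
  have hcover : {ξ | δ ≤ |Fm ξ (xm ξ) - F xstar|} ⊆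
      ⋃ c ∈ C, {ξ | a ≤ |(1 / m : ℝ) * ∑ i, g (ξ i) c - ∫ j, g j c ∂ν|} := by
    intro ξ hξ
    obtain ⟨x, hxP, hx⟩ := exists_le_abs_sub_of_isMinOn (hxm ξ).1 (hxm ξ).2 hxstar.1 hxstar.2 hξ
    obtain ⟨c, hcC, hxc⟩ := hC x hxP
    have hclose := abs_sub_le_abs_sub_add_of_lipschitzWith
      (LipschitzWith.mean fun i => hgLip (ξ i)) (LipschitzWith.mean hgLip) x c
    simp only [Fintype.card_fin, ← hfg _ hxP, ← hFm, ← hF, Real.coe_toNNReal _ hL.le] at hclose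
    refine mem_biUnion hcC ?_
    rw [mem_ofPred_eq, integral_uniformOfFintype, Fintype.card_fin]
    have := mul_le_mul_of_nonneg_left hxc hL.le
    linarith
  calc _ ≤ _ := measure_mono hcover
    _ ≤ _ := measure_biUnion_finset_le _ _
    _ ≤ ∑ _c ∈ C, ENNReal.ofReal (2 * exp (-(2 * m * a ^ 2) / (u - l) ^ 2)) :=
        Finset.sum_le_sum fun c _ => by
          simpa using measure_abs_sampleMean_sub_integral_ge_le (ι := Fin m) (ν := ν)
            (g := fun j => g j c) (measurable_of_finite _) (ae_of_all _ fun j => hgIcc j c) ha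
    _ = ENNReal.ofReal (C.card * (2 * exp (-(2 * m * a ^ 2) / (u - l) ^ 2))) := by
        rw [Finset.sum_const, nsmul_eq_mul, ENNReal.ofReal_mul (Nat.cast_nonneg _),
          ENNReal.ofReal_natCast]
    _ ≤ _ := by
        refine ENNReal.ofReal_le_ofReal ?_
        have := mul_le_mul_of_nonneg_right hCcard
          (by positivity : 0 ≤ 2 * exp (-(2 * m * a ^ 2) / (u - l) ^ 2))
        linarith

theorem stmt_7 (p n m : ℕ) [NeZero n] (hm : 0 < m)
    (P : Set (EuclideanSpace ℝ (Fin p))) (hP : IsCompact P) (hPne : P.Nonempty)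
    (f : Fin n → EuclideanSpace ℝ (Fin p) → ℝ)
    (L l u : ℝ) (hL : 0 < L) (hlu : l < u)
    (hLip : ∀ i, ∀ x ∈ P, ∀ y ∈ P, |f i x - f i y| ≤ L * dist x y)
    (hbdd : ∀ i, ∀ x ∈ P, l ≤ f i x ∧ f i x ≤ u)
    (Fm : (Fin m → Fin n) → EuclideanSpace ℝ (Fin p) → ℝ)
    (hFm : ∀ ξ x, Fm ξ x = (1 / m : ℝ) * ∑ i, f (ξ i) x)
    (F : EuclideanSpace ℝ (Fin p) → ℝ) (hF : ∀ x, F x = (1 / n : ℝ) * ∑ i, f i x)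
    (xm : (Fin m → Fin n) → EuclideanSpace ℝ (Fin p))
    (hxm : ∀ ξ, xm ξ ∈ P ∧ IsMinOn (Fm ξ) P (xm ξ))
    (xstar : EuclideanSpace ℝ (Fin p)) (hxstar : xstar ∈ P ∧ IsMinOn F P xstar)
    (δ ε : ℝ) (hδ : 0 < δ) (hε : 0 < ε) (hεD : ε < Metric.diam P)
    (hεL : ε < δ / (2 * L)) :
    (Measure.pi fun _ : Fin m => (PMF.uniformOfFintype (Fin n)).toMeasure)
        {ξ | δ ≤ |Fm ξ (xm ξ) - F xstar|} ≤
      ENNReal.ofReal (2 * (Real.sqrt p) ^ p * (Metric.diam P / ε) ^ p *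
        Real.exp (-(2 * m * (δ - 2 * L * ε) ^ 2) / (u - l) ^ 2)) :=
  stmt_7_general p n m hm P hP f L l u hL hlu hLip hbdd Fm hFm F hF xm hxm xstar hxstar δ ε hε hεD
    hεL
end
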